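/- With the notation above, a polynomial f = Σ_{k=0}^{p−1} f_k x^k of degree < p lies in the left ideal R·g, where g = [x − L(c_1), …, x − L(c_m)]_ℓ, if and only if its coefficient vector (f_0, …, f_{p−1}) lies in the left kernel of the p × m Wronskian matrix W_p(c_1,…,c_m) whose (i,j) entry is δ^{i-1}(c_j). -/

import Mathlib

open scoped BigOperators

/-- Coefficients of the product `f·g` in the differential operator ring `F[x;δ]`. -/
noncomputable def skewMul {F : Type*} [Field F] (δ : F → F) (f g : ℕ →₀ F) (n : ℕ) : F :=
  ∑ i ∈ f.support, ∑ j ∈ g.support,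
    if j ≤ n then f i * (Nat.choose i (n - j) : F) * δ^[i - (n - j)] (g j) else 0

/-- `f` is a right divisor of `g` in `F[x;δ]`: `g = q·f` for some `q`. -/
noncomputable def RDvd {F : Type*} [Field F] (δ : F → F) (f g : ℕ →₀ F) : Prop :=
  ∃ q : ℕ →₀ F, ∀ n : ℕ, g n = skewMul δ q f n

def IsMonicOfDeg {F : Type*} [Field F] (g : ℕ →₀ F) (m : ℕ) : Prop :=
  g m = 1 ∧ ∀ n : ℕ, m < n → g n = 0

/-!
Applying operators to elements of `F` makes `F` a left `F[x;δ]`-module: `(q·s)(c) = q(s(c))`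
by the general Leibniz rule. Since `(x - δc/c)(c) = 0`, every left multiple of
`x - L(c_j)` annihilates `c_j`; conversely, subtracting left multiples of `x - L(c_j)` lowers the
degree of an `f` with `f(c_j) = 0` until a constant `r` with `r·c_j = 0` is left, so `x - L(c_j)`
right-divides `f`. As `g` is the least common left multiple of the `x - L(c_j)`, `f ∈ R·g` iff
`f(c_j) = ∑ fᵢ δⁱ(c_j) = 0` for all `j`.
-/

open Finset

theorem Finset.sum_range_ite_choose_mul {R : Type*} [CommSemiring R] (α : R) (w u : ℕ → R)
    {i j M : ℕ} (hM : i + j < M) :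
    ∑ n ∈ range M, (if j ≤ n then α * (i.choose (n - j) : R) * w (i - (n - j)) else 0) * u n =
      α * ∑ k ∈ range (i + 1), (i.choose k : R) * (w (i - k) * u (k + j)) := by
  have hfilter : (range M).filter (j ≤ ·) = Ico j M := by ext n; simp [and_comm]
  simp_rw [ite_mul, zero_mul]
  rw [← sum_filter, hfilter, sum_Ico_eq_sum_range, mul_sum,
    ← sum_subset (range_subset_range.mpr (by omega : i + 1 ≤ M - j))]
  · refine sum_congr rfl fun k _ => ?_
    rw [Nat.add_sub_cancel_left, add_comm j k]
    ring
  · intro k _ hk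
    rw [Nat.add_sub_cancel_left, Nat.choose_eq_zero_of_lt (by simpa using hk)]
    simp

namespace Derivation

theorem exists_coe_eq {R : Type*} [CommRing R] {δ : R → R}
    (hadd : ∀ a b, δ (a + b) = δ a + δ b) (hmul : ∀ a b, δ (a * b) = a * δ b + δ a * b) :
    ∃ D : Derivation ℤ R R, ⇑D = δ :=
  ⟨{ toFun := δ
     map_add' := hadd
     map_smul' := fun n a => by
       simpa [Algebra.smul_def] using map_zsmul (AddMonoidHom.mk' δ hadd) n a
     map_one_eq_zero' := by simpa using hmul 1 1
     leibniz' := fun a b => by simp [hmul, mul_comm] }, rfl⟩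

variable {A R : Type*} [CommSemiring A] [CommSemiring R] [Algebra A R] (D : Derivation A R R)

theorem iterate_leibniz (n : ℕ) (a b : R) :
    (⇑D)^[n] (a * b) =
      ∑ k ∈ range (n + 1), (n.choose k : R) * ((⇑D)^[n - k] a * (⇑D)^[k] b) := by
  induction n with
  | zero => simp
  | succ n ih =>
    have hstep : ∀ k ∈ range (n + 1), D ((n.choose k : R) * ((⇑D)^[n - k] a * (⇑D)^[k] b)) =
        (n.choose k : R) * ((⇑D)^[n + 1 - k] a * (⇑D)^[k] b) +
          (n.choose k : R) * ((⇑D)^[n - k] a * (⇑D)^[k + 1] b) := by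
      intro k hk
      rw [Nat.sub_add_comm (Nat.lt_succ_iff.mp (mem_range.mp hk)), Function.iterate_succ_apply',
        Function.iterate_succ_apply', leibniz, leibniz, map_natCast]
      simp only [smul_eq_mul]
      ring
    rw [Function.iterate_succ_apply', ih, map_sum, sum_congr rfl hstep, sum_add_distrib,
      sum_choose_succ_mul (fun i j => (⇑D)^[j] a * (⇑D)^[i] b)]

end Derivation

section DifferentialOperator

variable {F : Type*} [Field F] (D : Derivation ℤ F F)

/-- The operator `h = ∑ hₙ xⁿ ∈ F[x;δ]` applied to `c`. -/
noncomputable def opEval (h : ℕ →₀ F) (c : F) : F :=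
  h.sum fun n a => a * (⇑D)^[n] c

theorem opEval_eq_sum_range {h : ℕ →₀ F} {N : ℕ} (hN : ∀ n, N ≤ n → h n = 0) (c : F) :
    opEval D h c = ∑ n ∈ range N, h n * (⇑D)^[n] c := by
  refine Finsupp.sum_of_support_subset h (fun n hn => ?_) _ fun n _ => zero_mul _
  by_contra hlt
  exact Finsupp.mem_support_iff.mp hn (hN n (by simpa using hlt))

theorem opEval_sub (h₁ h₂ : ℕ →₀ F) (c : F) :
    opEval D (h₁ - h₂) c = opEval D h₁ c - opEval D h₂ c :=
  Finsupp.sum_sub_index fun _ _ _ => sub_mul _ _ _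

theorem opEval_zero_right (h : ℕ →₀ F) : opEval D h 0 = 0 := by
  simp [opEval, iterate_map_zero]

theorem opEval_X_sub_logDeriv {c : F} (hc : c ≠ 0) :
    opEval D (Finsupp.single 1 1 - Finsupp.single 0 (D c / c)) c = 0 := by
  rw [opEval_sub, opEval, opEval, Finsupp.sum_single_index (zero_mul _),
    Finsupp.sum_single_index (zero_mul _)]
  field_simp
  simp

theorem opEval_of_eq_skewMul {q s h : ℕ →₀ F} (hh : ∀ n, h n = skewMul D q s n) (c : F) :
    opEval D h c = opEval D q (opEval D s c) := by
  obtain ⟨M, hM⟩ := exists_nat_subset_range (q.support ∪ s.support ∪ h.support)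
  simp only [union_subset_iff] at hM
  have hsum : opEval D h c = ∑ n ∈ range (M + M), h n * (⇑D)^[n] c :=
    Finsupp.sum_of_support_subset h (hM.2.trans (range_subset_range.mpr (by omega))) _
      fun n _ => zero_mul _
  rw [hsum]
  simp_rw [hh, skewMul, sum_mul]
  rw [sum_comm]
  refine sum_congr rfl fun i hi => ?_
  rw [sum_comm]
  simp only [opEval, Finsupp.sum]
  rw [← Derivation.coeFn_coe, ← Module.End.coe_pow, map_sum, mul_sum, Module.End.coe_pow,
    Derivation.coeFn_coe]
  refine sum_congr rfl fun j hj => ?_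
  have hij : i + j < M + M := add_lt_add (mem_range.mp (hM.1.1 hi)) (mem_range.mp (hM.1.2 hj))
  rw [sum_range_ite_choose_mul _ (fun m => (⇑D)^[m] (s j)) (fun m => (⇑D)^[m] c) hij,
    D.iterate_leibniz]
  simp_rw [← Function.iterate_add_apply]

variable {D} in
theorem opEval_eq_zero_of_rdvd {s h : ℕ →₀ F} (hsh : RDvd D s h) {c : F}
    (hs : opEval D s c = 0) : opEval D h c = 0 := by
  obtain ⟨q, hq⟩ := hsh
  rw [opEval_of_eq_skewMul D hq, hs, opEval_zero_right]

theorem skewMul_add_left (q₁ q₂ s : ℕ →₀ F) (n : ℕ) :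
    skewMul D (q₁ + q₂) s n = skewMul D q₁ s n + skewMul D q₂ s n := by
  simp only [skewMul]
  refine Finsupp.sum_add_index' (h := fun i a => ∑ j ∈ s.support,
    if j ≤ n then a * (i.choose (n - j) : F) * (⇑D)^[i - (n - j)] (s j) else 0) ?_ ?_
  · intro i
    simp
  · intro i a b
    rw [← sum_add_distrib]
    refine sum_congr rfl fun j _ => ?_
    split_ifs <;> ring

theorem skewMul_zero_left (s : ℕ →₀ F) (n : ℕ) : skewMul D 0 s n = 0 := by
  simp [skewMul]

theorem skewMul_eq_zero_of_lt {q s : ℕ →₀ F} {a b n : ℕ} (hq : ∀ i ∈ q.support, i ≤ a)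
    (hs : ∀ j ∈ s.support, j ≤ b) (hn : a + b < n) : skewMul D q s n = 0 := by
  refine sum_eq_zero fun i hi => sum_eq_zero fun j hj => ?_
  have := hq i hi
  have := hs j hj
  rw [Nat.choose_eq_zero_of_lt (by omega : i < n - j)]
  simp

theorem skewMul_add_eq_mul {q s : ℕ →₀ F} {a b : ℕ} (hq : ∀ i ∈ q.support, i ≤ a)
    (hs : ∀ j ∈ s.support, j ≤ b) : skewMul D q s (a + b) = q a * s b := by
  have hvanish : ∀ i ≤ a, ∀ j ≤ b, (i, j) ≠ (a, b) →
      (if j ≤ a + b then q i * (i.choose (a + b - j) : F) * (⇑D)^[i - (a + b - j)] (s j)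
        else 0) = 0 := by
    intro i hi j hj hne
    rw [Nat.choose_eq_zero_of_lt (by grind : i < a + b - j)]
    simp
  unfold skewMul
  rw [sum_eq_single a (fun i hi hia => sum_eq_zero fun j hj =>
      hvanish i (hq i hi) j (hs j hj) (by simp [hia]))
    (fun ha => by simp [Finsupp.notMem_support_iff.mp ha])]
  rw [sum_eq_single b (fun j hj hjb => hvanish a le_rfl j (hs j hj) (by simp [hjb]))
    (fun hb => by simp [Finsupp.notMem_support_iff.mp hb, iterate_map_zero])]
  simp

noncomputable def skewMulFinsupp (q s : ℕ →₀ F) : ℕ →₀ F :=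
  Finsupp.onFinset (range (q.support.sup id + s.support.sup id + 1)) (skewMul D q s)
    fun n hn => by
      by_contra hlt
      exact hn (skewMul_eq_zero_of_lt D (fun i hi => le_sup (f := id) hi)
        (fun j hj => le_sup (f := id) hj) (by simpa [Nat.lt_succ_iff] using hlt))

theorem skewMulFinsupp_apply (q s : ℕ →₀ F) (n : ℕ) :
    skewMulFinsupp D q s n = skewMul D q s n := rfl

theorem rdvd_skewMulFinsupp (q s : ℕ →₀ F) : RDvd D s (skewMulFinsupp D q s) :=
  ⟨q, skewMulFinsupp_apply D q s⟩

theorem rdvd_zero (s : ℕ →₀ F) : RDvd D s 0 :=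
  ⟨0, fun n => (skewMul_zero_left D s n).symm⟩

variable {D} in
theorem RDvd.add {s h₁ h₂ : ℕ →₀ F} (hh₁ : RDvd D s h₁) (hh₂ : RDvd D s h₂) :
    RDvd D s (h₁ + h₂) := by
  obtain ⟨q₁, hq₁⟩ := hh₁
  obtain ⟨q₂, hq₂⟩ := hh₂
  exact ⟨q₁ + q₂, fun n => by rw [skewMul_add_left, Finsupp.add_apply, hq₁, hq₂]⟩

theorem support_X_sub_C_le (a : F) :
    ∀ j ∈ (Finsupp.single 1 1 - Finsupp.single 0 a : ℕ →₀ F).support, j ≤ 1 := by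
  intro j hj
  rcases mem_union.mp (Finsupp.support_sub hj) with h | h <;>
    simp [mem_singleton.mp (Finsupp.support_single_subset h)]

theorem rdvd_X_sub_C_of_opEval_eq_zero_of_degree_le {a c : F} (hc : c ≠ 0)
    (hac : opEval D (Finsupp.single 1 1 - Finsupp.single 0 a) c = 0) (N : ℕ) {f : ℕ →₀ F}
    (hfN : ∀ n, N < n → f n = 0) (hf : opEval D f c = 0) :
    RDvd D (Finsupp.single 1 1 - Finsupp.single 0 a) f := by
  induction N generalizing f with
  | zero =>
    rw [opEval_eq_sum_range D (N := 1) hfN] at hf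
    have hf0 : f 0 = 0 := by simpa [hc] using hf
    have hf : f = 0 := Finsupp.ext fun n => by
      rcases n with _ | n
      · exact hf0
      · exact hfN _ n.succ_pos
    exact hf ▸ rdvd_zero D _
  | succ N ih =>
    set t := skewMulFinsupp D (Finsupp.single N (f (N + 1)))
      (Finsupp.single 1 1 - Finsupp.single 0 a)
    have hmono : ∀ i ∈ (Finsupp.single N (f (N + 1))).support, i ≤ N := fun i hi =>
      (mem_singleton.mp (Finsupp.support_single_subset hi)).le
    have ht : RDvd D (Finsupp.single 1 1 - Finsupp.single 0 a) t := rdvd_skewMulFinsupp D _ _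
    have hft : ∀ n, N < n → (f - t) n = 0 := by
      intro n hn
      rcases (show n = N + 1 ∨ N + 1 < n by omega) with rfl | hn
      · simp [t, skewMulFinsupp_apply, skewMul_add_eq_mul D hmono (support_X_sub_C_le a)]
      · simp [t, skewMulFinsupp_apply, hfN n (by omega),
          skewMul_eq_zero_of_lt D hmono (support_X_sub_C_le a) hn]
    have hevt : opEval D (f - t) c = 0 := by
      rw [opEval_sub, hf, opEval_eq_zero_of_rdvd ht hac, sub_zero]
    simpa using (ih hft hevt).add ht

theorem rdvd_X_sub_C_of_opEval_eq_zero {a c : F} (hc : c ≠ 0)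
    (hac : opEval D (Finsupp.single 1 1 - Finsupp.single 0 a) c = 0) {f : ℕ →₀ F}
    (hf : opEval D f c = 0) : RDvd D (Finsupp.single 1 1 - Finsupp.single 0 a) f := by
  obtain ⟨N, hN⟩ := exists_nat_subset_range f.support
  refine rdvd_X_sub_C_of_opEval_eq_zero_of_degree_le D hc hac N
    (fun n hn => Finsupp.notMem_support_iff.mp fun hmem => ?_) hf
  have := mem_range.mp (hN hmem)
  omega

end DifferentialOperator

theorem mem_left_ideal_iff_kernel_wronskian_general (Fq : Type*) [Field Fq]
    (p : ℕ)
    (δ : RatFunc Fq → RatFunc Fq)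
    (hadd : ∀ a b : RatFunc Fq, δ (a + b) = δ a + δ b)
    (hmul : ∀ a b : RatFunc Fq, δ (a * b) = a * δ b + δ a * b)
    (m : ℕ) (c : Fin m → RatFunc Fq) (hc0 : ∀ i, c i ≠ 0)
    (g : ℕ →₀ RatFunc Fq)
    (hdvd : ∀ i, RDvd δ (Finsupp.single 1 1 - Finsupp.single 0 (δ (c i) / c i)) g)
    (hgen : ∀ h : ℕ →₀ RatFunc Fq,
      (∀ i, RDvd δ (Finsupp.single 1 1 - Finsupp.single 0 (δ (c i) / c i)) h) →
      RDvd δ g h)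
    (f : ℕ →₀ RatFunc Fq) (hf : ∀ n : ℕ, p ≤ n → f n = 0) :
    RDvd δ g f ↔ ∀ j : Fin m, ∑ i ∈ Finset.range p, f i * δ^[i] (c j) = 0 := by
  obtain ⟨D, rfl⟩ := Derivation.exists_coe_eq hadd hmul
  have hroot j := opEval_X_sub_logDeriv D (hc0 j)
  simp_rw [← opEval_eq_sum_range D hf]
  constructor
  · exact fun hgf j => opEval_eq_zero_of_rdvd hgf (opEval_eq_zero_of_rdvd (hdvd j) (hroot j))
  · exact fun hev => hgen f fun j => rdvd_X_sub_C_of_opEval_eq_zero D (hc0 j) (hroot j) (hev j)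

/-- A polynomial `f` of degree `< p` lies in the left ideal generated by
`g = [x − L(c_1), …, x − L(c_m)]_ℓ` if and only if its coefficient vector lies in the
left kernel of the `p × m` Wronskian matrix `W_p(c_1, …, c_m)` with entries `δ^{i-1}(c_j)`. -/
theorem mem_left_ideal_iff_kernel_wronskian (Fq : Type*) [Field Fq] [Fintype Fq]
    (p : ℕ) [Fact p.Prime] [CharP Fq p]
    (δ : RatFunc Fq → RatFunc Fq)
    (hadd : ∀ a b : RatFunc Fq, δ (a + b) = δ a + δ b)
    (hmul : ∀ a b : RatFunc Fq, δ (a * b) = a * δ b + δ a * b)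
    (hδ : δ ≠ 0)
    (m : ℕ) (hm : m ≤ p - 1) (c : Fin m → RatFunc Fq) (hc0 : ∀ i, c i ≠ 0)
    (hli : ∀ a : Fin m → RatFunc Fq, (∀ i, δ (a i) = 0) → ∑ i, a i * c i = 0 → ∀ i, a i = 0)
    (g : ℕ →₀ RatFunc Fq)
    (hmonic : ∃ d : ℕ, IsMonicOfDeg g d)
    (hdvd : ∀ i, RDvd δ (Finsupp.single 1 1 - Finsupp.single 0 (δ (c i) / c i)) g)
    (hgen : ∀ h : ℕ →₀ RatFunc Fq,
      (∀ i, RDvd δ (Finsupp.single 1 1 - Finsupp.single 0 (δ (c i) / c i)) h) →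
      RDvd δ g h)
    (f : ℕ →₀ RatFunc Fq) (hf : ∀ n : ℕ, p ≤ n → f n = 0) :
    RDvd δ g f ↔ ∀ j : Fin m, ∑ i ∈ Finset.range p, f i * δ^[i] (c j) = 0 :=
  mem_left_ideal_iff_kernel_wronskian_general Fq p δ hadd hmul m c hc0 g hdvd hgen f hf
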